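/- Let q be a prime. Then Σ e_q(u⁻¹ + v⁻¹ − u'⁻¹ − v'⁻¹) = q² · |Kl(0;q)|⁴ − q · Σ_{r ∈ ZMod q} |Kl(r;q)|⁴, where the sum on the left-hand side runs over all quadruples (u, v, u', v') ∈ ((ZMod q)ˣ)⁴ with u + v − u' − v' ≠ 0. -/

import Mathlib

open scoped BigOperators

/-- The additive character `e_q(x) = e(x̃/q)` on `ZMod q`. -/
noncomputable def eChar (q : ℕ) (x : ZMod q) : ℂ :=
  Complex.exp (2 * (Real.pi : ℂ) * Complex.I * (x.val : ℂ) / (q : ℂ))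

/-- The normalized Kloosterman sum `Kl(x;q) = q^{-1/2} ∑_{d ∈ (ZMod q)ˣ} e_q(x d + d⁻¹)`. -/
noncomputable def Kl (q : ℕ) [NeZero q] (x : ZMod q) : ℂ :=
  ((Real.sqrt q)⁻¹ : ℝ) *
    ∑ d : (ZMod q)ˣ, eChar q (x * (d : ZMod q) + ((d⁻¹ : (ZMod q)ˣ) : ZMod q))

/-- `ℓ¹`-norm of a (finitely supported) sequence of complex numbers. -/
noncomputable def l1norm {ι : Type*} (f : ι → ℂ) : ℝ := ∑' i, ‖f i‖

/-- `ℓ²`-norm of a (finitely supported) sequence of complex numbers. -/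
noncomputable def l2norm {ι : Type*} (f : ι → ℂ) : ℝ := Real.sqrt (∑' i, ‖f i‖ ^ 2)

/-! Orthogonality of additive characters gives `[s ≠ 0] = 1 - q⁻¹ ∑_r e_q(r s)`. Inserted with
`s = u + v - u' - v'`, it turns the sum into the unrestricted sum over quadruples minus `q⁻¹ ∑_r`
of the sums twisted by `e_q(r s)`. Expanding `|∑_d e_q(r d + d⁻¹)|⁴` shows that the twisted sum is
`q² |Kl(r;q)|⁴`, and the unrestricted one is its case `r = 0`. -/

open scoped ComplexConjugate

lemma ofReal_norm_sum_pow_four {ι : Type*} [Fintype ι] (f : ι → ℂ) :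
    ((‖∑ i, f i‖ : ℝ) : ℂ) ^ 4 =
      ∑ u, ∑ v, ∑ u', ∑ v', f u * f v * conj (f u') * conj (f v') := by
  have hsq : ((‖∑ i, f i‖ : ℝ) : ℂ) ^ 2 = (∑ i, f i) * conj (∑ i, f i) := by
    rw [Complex.mul_conj, Complex.normSq_eq_norm_sq, Complex.ofReal_pow]
  rw [show 4 = 2 * 2 from rfl, pow_mul, hsq, sq, mul_mul_mul_comm, map_sum, Finset.sum_mul_sum,
    Finset.sum_mul_sum]
  simp_rw [Finset.sum_mul, Finset.mul_sum, mul_assoc]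

namespace AddChar

variable {R : Type*} [CommRing R] [Fintype R]

lemma ite_ne_zero_eq_sub_inv_card_mul_sum [DecidableEq R] {ψ : AddChar R ℂ} (hψ : ψ.IsPrimitive)
    (s t : R) :
    (if s ≠ 0 then ψ t else 0) = ψ t - (Fintype.card R : ℂ)⁻¹ * ∑ r, ψ (r * s + t) := by
  have hcard : (Fintype.card R : ℂ) ≠ 0 := Nat.cast_ne_zero.2 Fintype.card_ne_zero
  simp only [map_add_eq_mul, ← Finset.sum_mul, sum_mulShift s hψ]
  split_ifs with h <;> simp_all

lemma mul_mul_conj_mul_conj {G : Type*} [AddCommGroup G] [Finite G] (ψ : AddChar G ℂ)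
    (a b c d : G) : ψ a * ψ b * conj (ψ c) * conj (ψ d) = ψ (a + b - c - d) := by
  simp only [← map_neg_eq_conj, ← map_add_eq_mul, sub_eq_add_neg]

end AddChar

section Kloosterman

variable {q : ℕ} [NeZero q]

lemma eChar_eq_stdAddChar (x : ZMod q) : eChar q x = ZMod.stdAddChar x := by
  rw [ZMod.stdAddChar_apply, ZMod.toCircle_apply, eChar]

lemma sq_mul_norm_Kl_pow_four (r : ZMod q) :
    (q : ℝ) ^ 2 * ‖Kl q r‖ ^ 4 =
      ‖∑ d : (ZMod q)ˣ, eChar q (r * (d : ZMod q) + ((d⁻¹ : (ZMod q)ˣ) : ZMod q))‖ ^ 4 := by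
  have hq : (0 : ℝ) < q := Nat.cast_pos.2 (Nat.pos_of_neZero q)
  rw [Kl, norm_mul, Complex.norm_real, Real.norm_of_nonneg (by positivity), mul_pow, inv_pow,
    show (4 : ℕ) = 2 * 2 from rfl, pow_mul, Real.sq_sqrt hq.le]
  field_simp

lemma sq_mul_Kl_pow_four_eq_sum (r : ZMod q) :
    (q : ℂ) ^ 2 * ((‖Kl q r‖ : ℝ) : ℂ) ^ 4 =
      ∑ u : (ZMod q)ˣ, ∑ v : (ZMod q)ˣ, ∑ u' : (ZMod q)ˣ, ∑ v' : (ZMod q)ˣ,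
        ZMod.stdAddChar (r * ((u : ZMod q) + (v : ZMod q) - (u' : ZMod q) - (v' : ZMod q)) +
          ((u : ZMod q)⁻¹ + (v : ZMod q)⁻¹ - (u' : ZMod q)⁻¹ - (v' : ZMod q)⁻¹)) := by
  rw [← Complex.ofReal_natCast, ← Complex.ofReal_pow, ← Complex.ofReal_pow, ← Complex.ofReal_mul,
    sq_mul_norm_Kl_pow_four, Complex.ofReal_pow, ofReal_norm_sum_pow_four]
  simp only [eChar_eq_stdAddChar, AddChar.mul_mul_conj_mul_conj, ← ZMod.inv_coe_unit]
  congr! 5 with u v u' v'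
  ring

end Kloosterman

/-- The evaluation of `Σ₁`, the contribution of the quadruples `(u,v,u',v')` of units with
`u + v - u' - v' ≠ 0`, in terms of fourth moments of Kloosterman sums. -/
theorem sigma_one_identity (q : ℕ) [Fact (Nat.Prime q)] :
    (∑ u : (ZMod q)ˣ, ∑ v : (ZMod q)ˣ, ∑ u' : (ZMod q)ˣ, ∑ v' : (ZMod q)ˣ,
        if (u : ZMod q) + (v : ZMod q) - (u' : ZMod q) - (v' : ZMod q) ≠ 0 then
          eChar q ((u : ZMod q)⁻¹ + (v : ZMod q)⁻¹ - (u' : ZMod q)⁻¹ - (v' : ZMod q)⁻¹)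
        else 0) =
      (q : ℂ) ^ 2 * ((‖Kl q 0‖ : ℝ) : ℂ) ^ 4 -
        (q : ℂ) * ∑ r : ZMod q, ((‖Kl q r‖ : ℝ) : ℂ) ^ 4 := by
  have hq : (q : ℂ) ≠ 0 := Nat.cast_ne_zero.2 (NeZero.ne q)
  have hmoment : (q : ℂ) * ∑ r : ZMod q, ((‖Kl q r‖ : ℝ) : ℂ) ^ 4 =
      (q : ℂ)⁻¹ * ∑ r : ZMod q, (q : ℂ) ^ 2 * ((‖Kl q r‖ : ℝ) : ℂ) ^ 4 := by
    rw [← Finset.mul_sum]; field_simp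
  rw [hmoment]
  simp only [sq_mul_Kl_pow_four_eq_sum, zero_mul, zero_add]
  simp only [eChar_eq_stdAddChar,
    AddChar.ite_ne_zero_eq_sub_inv_card_mul_sum (ZMod.isPrimitive_stdAddChar q), ZMod.card]
  simp only [Finset.sum_sub_distrib, Finset.mul_sum, Finset.sum_comm (γ := ZMod q)]
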